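/- Let a₀, a₁, …, a_k be nonnegative integers and define the vectors C_j from these digits. Then the 3×3 matrix A₁^{a₀}A₀·A₁^{a₁}A₀ ⋯ A₁^{a_k}A₀ has columns, in order, C_{k−2}, C_{k−1}, C_k. -/
import Mathlib


open Matrix

/-- The integer matrix `A₀` with rows (0,0,1), (1,0,−1), (0,1,0). -/
def A0 : Matrix (Fin 3) (Fin 3) ℤ := !![0,0,1; 1,0,-1; 0,1,0]

/-- The integer matrix `A₁` with rows (1,0,0), (0,1,0), (−1,0,1). -/
def A1 : Matrix (Fin 3) (Fin 3) ℤ := !![1,0,0; 0,1,0; -1,0,1]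

/-- The vectors `C_j` (with indices shifted by 3):
`Cvec a 0 = C₋₃ = (1,0,0)ᵀ`, `Cvec a 1 = C₋₂ = (0,1,0)ᵀ`, `Cvec a 2 = C₋₁ = (0,0,1)ᵀ`,
and `Cvec a (j+3) = C_j = C_{j-3} - C_{j-2} - a_j C_{j-1}` for `j ≥ 0`. -/
def Cvec (a : ℕ → ℕ) : ℕ → Fin 3 → ℤ
  | 0 => ![1, 0, 0]
  | 1 => ![0, 1, 0]
  | 2 => ![0, 0, 1]
  | (n + 3) => Cvec a n - Cvec a (n + 1) - (a n : ℤ) • Cvec a (n + 2)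

lemma A1_pow (n : ℕ) : A1 ^ n = !![1,0,0; 0,1,0; -(n:ℤ),0,1] := by
  induction n with
  | zero => simp [Matrix.one_fin_three]
  | succ n ih =>
    rw [pow_succ, ih, A1]
    ext i j
    fin_cases i <;> fin_cases j <;>
      simp [Matrix.mul_apply, Fin.sum_univ_three] <;> ring

lemma B_eq (n : ℕ) : A1 ^ n * A0 = !![0,0,1; 1,0,-1; 0,1,-(n:ℤ)] := by
  rw [A1_pow, A0]
  ext i j
  fin_cases i <;> fin_cases j <;>
    simp [Matrix.mul_apply, Fin.sum_univ_three]

lemma mulB (M : Matrix (Fin 3) (Fin 3) ℤ) (n : ℕ) (i : Fin 3) :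
    (M * (A1 ^ n * A0)) i 0 = M i 1 ∧
    (M * (A1 ^ n * A0)) i 1 = M i 2 ∧
    (M * (A1 ^ n * A0)) i 2 = M i 0 - M i 1 - (n:ℤ) * M i 2 := by
  rw [B_eq]
  refine ⟨?_, ?_, ?_⟩ <;>
    simp [Matrix.mul_apply, Fin.sum_univ_three] <;> ring

/-- The matrix `A₁^{a₀}A₀ · A₁^{a₁}A₀ ⋯ A₁^{a_k}A₀` has columns, in order,
`C_{k−2}, C_{k−1}, C_k` (that is, `Cvec a (k+1)`, `Cvec a (k+2)`, `Cvec a (k+3)`). -/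
theorem prod_columns_eq_C (k : ℕ) (a : ℕ → ℕ) :
    ∀ i : Fin 3,
      ((List.ofFn fun j : Fin (k + 1) => A1 ^ (a j) * A0).prod) i 0 = Cvec a (k + 1) i ∧
      ((List.ofFn fun j : Fin (k + 1) => A1 ^ (a j) * A0).prod) i 1 = Cvec a (k + 2) i ∧
      ((List.ofFn fun j : Fin (k + 1) => A1 ^ (a j) * A0).prod) i 2 = Cvec a (k + 3) i := by
  induction k with
  | zero =>
    intro i
    have h : (List.ofFn fun j : Fin 1 => A1 ^ (a j) * A0).prod = A1 ^ (a 0) * A0 := by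
      simp
    rw [h, B_eq]
    fin_cases i <;>
      simp [Cvec] <;> ring
  | succ k ih =>
    intro i
    have hsplit : (List.ofFn fun j : Fin (k + 2) => A1 ^ (a j) * A0).prod =
        (List.ofFn fun j : Fin (k + 1) => A1 ^ (a j.castSucc) * A0).prod *
          (A1 ^ (a (k + 1)) * A0) := by
      rw [List.ofFn_succ', List.concat_eq_append, List.prod_append]
      simp [Fin.last]
    have hcast : (List.ofFn fun j : Fin (k + 1) => A1 ^ (a j.castSucc) * A0) =
        (List.ofFn fun j : Fin (k + 1) => A1 ^ (a j) * A0) := by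
      congr 1
    rw [hsplit, hcast]
    set M := (List.ofFn fun j : Fin (k + 1) => A1 ^ (a j) * A0).prod with hM
    obtain ⟨h0, h1, h2⟩ := ih i
    obtain ⟨g0, g1, g2⟩ := mulB M (a (k + 1)) i
    refine ⟨by rw [g0, h1], by rw [g1, h2], ?_⟩
    rw [g2, h0, h1, h2]
    show _ = Cvec a (k + 1 + 3) i
    simp [Cvec]
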